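/- Let a ∈ ℂ and let φ be a ½-derivation of the deformative Schrödinger–Witt algebra 𝒲(a,−1,1/2). Then there exist finitely supported families of complex numbers {α_t}_{t∈ℤ}, {β_t}_{t∈ℤ}, {γ_t}_{t∈ℤ} such that for every m ∈ ℤ: φ(L_m) = Σ_t α_t·L_{m+t} + Σ_t β_t·I_{m+t} + Σ_t γ_t·Y_{m+t}, φ(I_m) = Σ_t α_t·I_{m+t}, and φ(Y_m) = Σ_t α_t·Y_{m+t} + Σ_t γ_t·I_{m+t+1}. -/

import Mathlib

/-- Basis of the deformative Schrödinger–Witt algebra 𝒲(a,b,1/2):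
`L m`, `I m`, and `Y m` (the latter denotes `Y_{m+1/2}`). -/
inductive SWBasis : Type
  | L : ℤ → SWBasis
  | I : ℤ → SWBasis
  | Y : ℤ → SWBasis

/-- Underlying vector space of 𝒲(a,b,1/2): the free ℂ-module on `SWBasis`. -/
abbrev SW : Type := SWBasis →₀ ℂ

noncomputable def Lb (m : ℤ) : SW := Finsupp.single (SWBasis.L m) 1
noncomputable def Ib (m : ℤ) : SW := Finsupp.single (SWBasis.I m) 1
noncomputable def Yb (m : ℤ) : SW := Finsupp.single (SWBasis.Y m) 1

/-- The Lie bracket of 𝒲(a,b,1/2) on basis elements. -/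
noncomputable def swBracketBasis (a b : ℂ) : SWBasis → SWBasis → SW
  | SWBasis.L m, SWBasis.L n => ((n : ℂ) - (m : ℂ)) • Lb (m + n)
  | SWBasis.L m, SWBasis.I n => ((n : ℂ) + b * (m : ℂ) + a) • Ib (m + n)
  | SWBasis.I m, SWBasis.L n => -(((m : ℂ) + b * (n : ℂ) + a) • Ib (n + m))
  | SWBasis.L m, SWBasis.Y n =>
      ((n : ℂ) + 1 / 2 + ((b - 1) * (m : ℂ) + a) / 2) • Yb (m + n)
  | SWBasis.Y m, SWBasis.L n =>
      -(((m : ℂ) + 1 / 2 + ((b - 1) * (n : ℂ) + a) / 2) • Yb (n + m))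
  | SWBasis.Y m, SWBasis.Y n => ((n : ℂ) - (m : ℂ)) • Ib (m + n + 1)
  | _, _ => 0

/-- The Lie bracket of 𝒲(a,b,1/2), extended bilinearly from the basis. -/
noncomputable def swBracket (a b : ℂ) : SW →ₗ[ℂ] SW →ₗ[ℂ] SW :=
  Finsupp.lift (SW →ₗ[ℂ] SW) ℂ SWBasis fun x =>
    Finsupp.lift SW ℂ SWBasis fun y => swBracketBasis a b x y

/-- `φ` is a ½-derivation of 𝒲(a,b,1/2). -/
def IsHalfDerivationSW (a b : ℂ) (φ : SW →ₗ[ℂ] SW) : Prop :=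
  ∀ x y : SW, φ (swBracket a b x y) =
    (1 / 2 : ℂ) • (swBracket a b (φ x) y + swBracket a b x (φ y))


-- helpers
lemma sum_mul_eq (u : SW) (F : SWBasis → ℂ) (j₀ : SWBasis)
    (h : ∀ j, j ≠ j₀ → F j = 0) : (u.sum fun j d => d * F j) = u j₀ * F j₀ := by
  classical
  rw [Finsupp.sum]
  exact Finset.sum_eq_single j₀ (fun b _ hb => by rw [h b hb, mul_zero])
    (fun hj => by rw [Finsupp.notMem_support_iff.mp hj, zero_mul])

lemma br_apply_right (a b : ℂ) (u : SW) (y e : SWBasis) :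
    (swBracket a b u (Finsupp.single y 1)) e
      = u.sum fun i c => c * (swBracketBasis a b i y) e := by
  rw [swBracket, Finsupp.lift_apply, LinearMap.finsupp_sum_apply, Finsupp.sum_apply]
  apply Finsupp.sum_congr
  intro i _
  rw [LinearMap.smul_apply, Finsupp.lift_apply,
    Finsupp.sum_single_index (by simp), one_smul, Finsupp.smul_apply, smul_eq_mul]

lemma br_apply_left (a b : ℂ) (u : SW) (x e : SWBasis) :
    (swBracket a b (Finsupp.single x 1) u) e
      = u.sum fun j d => d * (swBracketBasis a b x j) e := by
  rw [swBracket, Finsupp.lift_apply, Finsupp.sum_single_index (by simp), one_smul,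
    Finsupp.lift_apply, Finsupp.sum_apply]
  apply Finsupp.sum_congr
  intro j _
  rw [Finsupp.smul_apply, smul_eq_mul]

lemma br_single_single (a b : ℂ) (x y : SWBasis) :
    swBracket a b (Finsupp.single x 1) (Finsupp.single y 1) = swBracketBasis a b x y := by
  rw [swBracket, Finsupp.lift_apply, Finsupp.sum_single_index (by simp), one_smul,
    Finsupp.lift_apply, Finsupp.sum_single_index (by simp), one_smul]

lemma hphi_eval (a : ℂ) (φ : SW →ₗ[ℂ] SW) (hφ : IsHalfDerivationSW a (-1) φ)
    (x y e : SWBasis) :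
    φ (swBracketBasis a (-1) x y) e =
    (1/2 : ℂ) * ((φ (Finsupp.single x 1)).sum (fun i c => c * (swBracketBasis a (-1) i y) e)
           + (φ (Finsupp.single y 1)).sum (fun j d => d * (swBracketBasis a (-1) x j) e)) := by
  have h := hφ (Finsupp.single x 1) (Finsupp.single y 1)
  rw [br_single_single] at h
  have h2 := congrArg (fun v : SW => v e) h
  simp only [Finsupp.smul_apply, Finsupp.add_apply, smul_eq_mul] at h2
  rw [h2, br_apply_right, br_apply_left]

lemma smul_single_ne (c : ℂ) (x e : SWBasis) (h : x ≠ e) :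
    (c • Finsupp.single x (1:ℂ)) e = 0 := by
  rw [Finsupp.smul_apply, Finsupp.single_eq_of_ne' h, smul_zero]

lemma neg_smul_single_ne (c : ℂ) (x e : SWBasis) (h : x ≠ e) :
    (-(c • Finsupp.single x (1:ℂ))) e = 0 := by
  rw [Finsupp.neg_apply, Finsupp.smul_apply, Finsupp.single_eq_of_ne' h, smul_zero, neg_zero]

lemma sR_L_L (a : ℂ) (u : SW) (k s : ℤ) :
    (u.sum fun i c => c * (swBracketBasis a (-1) i (SWBasis.L k)) (SWBasis.L s)) = (2*(k:ℂ) - s) * u (SWBasis.L (s-k)) := by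
  rw [sum_mul_eq _ _ (SWBasis.L (s-k))]
  · simp only [swBracketBasis, Lb, Ib, Yb, Finsupp.smul_apply, Finsupp.neg_apply, smul_eq_mul]
    rw [show s - k + k = s from by omega, Finsupp.single_eq_same, mul_one]
    push_cast; ring
  · rintro (t|t|t) hj <;>
      first
        | rfl
        | (refine smul_single_ne _ _ _ ?_; simp_all <;> omega)
        | (refine neg_smul_single_ne _ _ _ ?_; simp_all <;> omega)

lemma sR_L_I (a : ℂ) (u : SW) (k s : ℤ) :
    (u.sum fun i c => c * (swBracketBasis a (-1) i (SWBasis.L k)) (SWBasis.I s)) = (2*(k:ℂ) - s - a) * u (SWBasis.I (s-k)) := by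
  rw [sum_mul_eq _ _ (SWBasis.I (s-k))]
  · simp only [swBracketBasis, Lb, Ib, Yb, Finsupp.smul_apply, Finsupp.neg_apply, smul_eq_mul]
    rw [show k + (s - k) = s from by omega, Finsupp.single_eq_same, mul_one]
    push_cast; ring
  · rintro (t|t|t) hj <;>
      first
        | rfl
        | (refine smul_single_ne _ _ _ ?_; simp_all <;> omega)
        | (refine neg_smul_single_ne _ _ _ ?_; simp_all <;> omega)

lemma sR_L_Y (a : ℂ) (u : SW) (k s : ℤ) :
    (u.sum fun i c => c * (swBracketBasis a (-1) i (SWBasis.L k)) (SWBasis.Y s)) = (2*(k:ℂ) - s - 1/2 - a/2) * u (SWBasis.Y (s-k)) := by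
  rw [sum_mul_eq _ _ (SWBasis.Y (s-k))]
  · simp only [swBracketBasis, Lb, Ib, Yb, Finsupp.smul_apply, Finsupp.neg_apply, smul_eq_mul]
    rw [show k + (s - k) = s from by omega, Finsupp.single_eq_same, mul_one]
    push_cast; ring
  · rintro (t|t|t) hj <;>
      first
        | rfl
        | (refine smul_single_ne _ _ _ ?_; simp_all <;> omega)
        | (refine neg_smul_single_ne _ _ _ ?_; simp_all <;> omega)

lemma sR_I_I (a : ℂ) (u : SW) (k s : ℤ) :
    (u.sum fun i c => c * (swBracketBasis a (-1) i (SWBasis.I k)) (SWBasis.I s)) = (2*(k:ℂ) - s + a) * u (SWBasis.L (s-k)) := by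
  rw [sum_mul_eq _ _ (SWBasis.L (s-k))]
  · simp only [swBracketBasis, Lb, Ib, Yb, Finsupp.smul_apply, Finsupp.neg_apply, smul_eq_mul]
    rw [show s - k + k = s from by omega, Finsupp.single_eq_same, mul_one]
    push_cast; ring
  · rintro (t|t|t) hj <;>
      first
        | rfl
        | (refine smul_single_ne _ _ _ ?_; simp_all <;> omega)
        | (refine neg_smul_single_ne _ _ _ ?_; simp_all <;> omega)

lemma sR_Y_I (a : ℂ) (u : SW) (k s : ℤ) :
    (u.sum fun i c => c * (swBracketBasis a (-1) i (SWBasis.Y k)) (SWBasis.I s)) = (2*(k:ℂ) - s + 1) * u (SWBasis.Y (s-k-1)) := by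
  rw [sum_mul_eq _ _ (SWBasis.Y (s-k-1))]
  · simp only [swBracketBasis, Lb, Ib, Yb, Finsupp.smul_apply, Finsupp.neg_apply, smul_eq_mul]
    rw [show s - k - 1 + k + 1 = s from by omega, Finsupp.single_eq_same, mul_one]
    push_cast; ring
  · rintro (t|t|t) hj <;>
      first
        | rfl
        | (refine smul_single_ne _ _ _ ?_; simp_all <;> omega)
        | (refine neg_smul_single_ne _ _ _ ?_; simp_all <;> omega)

lemma sR_Y_Y (a : ℂ) (u : SW) (k s : ℤ) :
    (u.sum fun i c => c * (swBracketBasis a (-1) i (SWBasis.Y k)) (SWBasis.Y s)) = (2*(k:ℂ) - s + 1/2 + a/2) * u (SWBasis.L (s-k)) := by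
  rw [sum_mul_eq _ _ (SWBasis.L (s-k))]
  · simp only [swBracketBasis, Lb, Ib, Yb, Finsupp.smul_apply, Finsupp.neg_apply, smul_eq_mul]
    rw [show s - k + k = s from by omega, Finsupp.single_eq_same, mul_one]
    push_cast; ring
  · rintro (t|t|t) hj <;>
      first
        | rfl
        | (refine smul_single_ne _ _ _ ?_; simp_all <;> omega)
        | (refine neg_smul_single_ne _ _ _ ?_; simp_all <;> omega)

lemma sR_Y_L (a : ℂ) (u : SW) (k s : ℤ) :
    (u.sum fun i c => c * (swBracketBasis a (-1) i (SWBasis.Y k)) (SWBasis.L s)) = 0 := by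
  rw [Finsupp.sum]
  apply Finset.sum_eq_zero
  intro i _
  rcases i with t|t|t <;> refine mul_eq_zero_of_right _ ?_ <;>
    first
      | rfl
      | (refine smul_single_ne _ _ _ ?_; simp)
      | (refine neg_smul_single_ne _ _ _ ?_; simp)

lemma sL_L_L (a : ℂ) (u : SW) (k s : ℤ) :
    (u.sum fun i c => c * (swBracketBasis a (-1) (SWBasis.L k) i) (SWBasis.L s)) = ((s:ℂ) - 2*k) * u (SWBasis.L (s-k)) := by
  rw [sum_mul_eq _ _ (SWBasis.L (s-k))]
  · simp only [swBracketBasis, Lb, Ib, Yb, Finsupp.smul_apply, Finsupp.neg_apply, smul_eq_mul]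
    rw [show k + (s - k) = s from by omega, Finsupp.single_eq_same, mul_one]
    push_cast; ring
  · rintro (t|t|t) hj <;>
      first
        | rfl
        | (refine smul_single_ne _ _ _ ?_; simp_all <;> omega)
        | (refine neg_smul_single_ne _ _ _ ?_; simp_all <;> omega)

lemma sL_L_I (a : ℂ) (u : SW) (k s : ℤ) :
    (u.sum fun i c => c * (swBracketBasis a (-1) (SWBasis.L k) i) (SWBasis.I s)) = ((s:ℂ) - 2*k + a) * u (SWBasis.I (s-k)) := by
  rw [sum_mul_eq _ _ (SWBasis.I (s-k))]
  · simp only [swBracketBasis, Lb, Ib, Yb, Finsupp.smul_apply, Finsupp.neg_apply, smul_eq_mul]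
    rw [show k + (s - k) = s from by omega, Finsupp.single_eq_same, mul_one]
    push_cast; ring
  · rintro (t|t|t) hj <;>
      first
        | rfl
        | (refine smul_single_ne _ _ _ ?_; simp_all <;> omega)
        | (refine neg_smul_single_ne _ _ _ ?_; simp_all <;> omega)

lemma sL_L_Y (a : ℂ) (u : SW) (k s : ℤ) :
    (u.sum fun i c => c * (swBracketBasis a (-1) (SWBasis.L k) i) (SWBasis.Y s)) = ((s:ℂ) - 2*k + 1/2 + a/2) * u (SWBasis.Y (s-k)) := by
  rw [sum_mul_eq _ _ (SWBasis.Y (s-k))]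
  · simp only [swBracketBasis, Lb, Ib, Yb, Finsupp.smul_apply, Finsupp.neg_apply, smul_eq_mul]
    rw [show k + (s - k) = s from by omega, Finsupp.single_eq_same, mul_one]
    push_cast; ring
  · rintro (t|t|t) hj <;>
      first
        | rfl
        | (refine smul_single_ne _ _ _ ?_; simp_all <;> omega)
        | (refine neg_smul_single_ne _ _ _ ?_; simp_all <;> omega)

lemma sL_Y_I (a : ℂ) (u : SW) (k s : ℤ) :
    (u.sum fun i c => c * (swBracketBasis a (-1) (SWBasis.Y k) i) (SWBasis.I s)) = ((s:ℂ) - 2*k - 1) * u (SWBasis.Y (s-k-1)) := by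
  rw [sum_mul_eq _ _ (SWBasis.Y (s-k-1))]
  · simp only [swBracketBasis, Lb, Ib, Yb, Finsupp.smul_apply, Finsupp.neg_apply, smul_eq_mul]
    rw [show k + (s - k - 1) + 1 = s from by omega, Finsupp.single_eq_same, mul_one]
    push_cast; ring
  · rintro (t|t|t) hj <;>
      first
        | rfl
        | (refine smul_single_ne _ _ _ ?_; simp_all <;> omega)
        | (refine neg_smul_single_ne _ _ _ ?_; simp_all <;> omega)

lemma sL_Y_Y (a : ℂ) (u : SW) (k s : ℤ) :
    (u.sum fun i c => c * (swBracketBasis a (-1) (SWBasis.Y k) i) (SWBasis.Y s)) = ((s:ℂ) - 2*k - 1/2 - a/2) * u (SWBasis.L (s-k)) := by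
  rw [sum_mul_eq _ _ (SWBasis.L (s-k))]
  · simp only [swBracketBasis, Lb, Ib, Yb, Finsupp.smul_apply, Finsupp.neg_apply, smul_eq_mul]
    rw [show s - k + k = s from by omega, Finsupp.single_eq_same, mul_one]
    push_cast; ring
  · rintro (t|t|t) hj <;>
      first
        | rfl
        | (refine smul_single_ne _ _ _ ?_; simp_all <;> omega)
        | (refine neg_smul_single_ne _ _ _ ?_; simp_all <;> omega)

lemma sL_Y_L (a : ℂ) (u : SW) (k s : ℤ) :
    (u.sum fun i c => c * (swBracketBasis a (-1) (SWBasis.Y k) i) (SWBasis.L s)) = 0 := by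
  rw [Finsupp.sum]
  apply Finset.sum_eq_zero
  intro i _
  rcases i with t|t|t <;> refine mul_eq_zero_of_right _ ?_ <;>
    first
      | rfl
      | (refine smul_single_ne _ _ _ ?_; simp)
      | (refine neg_smul_single_ne _ _ _ ?_; simp)

lemma Lb_def (m : ℤ) : Finsupp.single (SWBasis.L m) (1:ℂ) = Lb m := rfl
lemma Ib_def (m : ℤ) : Finsupp.single (SWBasis.I m) (1:ℂ) = Ib m := rfl
lemma Yb_def (m : ℤ) : Finsupp.single (SWBasis.Y m) (1:ℂ) = Yb m := rfl

lemma key1 (f : ℤ → ℂ) (g c : ℂ) (hf0 : f 0 = g)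
    (H : ∀ n k : ℤ, ((k:ℂ) - (n:ℂ)) * f (n+k)
        = (1/2) * (((((k:ℂ)-(n:ℂ))) - c) * f n + ((((k:ℂ)-(n:ℂ))) + c) * f k)) :
    ∀ m : ℤ, f m = g := by
  have hgood : ∀ k : ℤ, (k:ℂ) ≠ c → f k = g := by
    intro k hk
    have h := H 0 k
    rw [zero_add, hf0] at h
    have h2 : ((k:ℂ) - c) * (f k - g) = 0 := by push_cast at h; linear_combination 2 * h
    rcases mul_eq_zero.mp h2 with h3 | h3
    · exact absurd (by linear_combination h3) hk
    · linear_combination h3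
  intro m
  by_cases hm : (m:ℂ) = c
  · have hn : ∃ n : ℤ, n ≠ 0 ∧ n ≠ m ∧ m - 2*n ≠ 0 := by
      by_cases h12 : m = 1 ∨ m = 2
      · exact ⟨-1, by omega, by omega, by omega⟩
      · exact ⟨1, by omega, by omega, by omega⟩
    obtain ⟨n, hn0, hnm, h2n⟩ := hn
    have h := H n (m - n)
    rw [show n + (m-n) = m from by omega] at h
    have hfn : f n = g := hgood n (fun hc => hnm (by exact_mod_cast hc.trans hm.symm))
    have hfk : f (m-n) = g := hgood (m-n) (fun hc => hn0 (by
      have h4 : ((m-n:ℤ):ℂ) = (m:ℂ) := hc.trans hm.symm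
      push_cast at h4
      exact_mod_cast (by linear_combination -h4 : ((n:ℤ):ℂ) = ((0:ℤ):ℂ))))
    rw [hfn, hfk] at h
    have hne : ((m:ℂ) - 2*(n:ℂ)) ≠ 0 := by
      intro hc
      apply h2n
      exact_mod_cast (by push_cast; linear_combination hc : ((m - 2*n:ℤ):ℂ) = ((0:ℤ):ℂ))
    have h5 : ((m:ℂ) - 2*(n:ℂ)) * f m = ((m:ℂ) - 2*(n:ℂ)) * g := by push_cast at h ⊢; linear_combination h
    exact mul_left_cancel₀ hne h5
  · exact hgood m hm

lemma key2 (f : ℤ → ℂ) (g c d : ℂ)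
    (H : ∀ n k : ℤ, (((k:ℂ) - (n:ℂ)) + d) * f (n+k)
        = (1/2) * (((((k:ℂ)-(n:ℂ))) - c + d) * g + ((((k:ℂ)-(n:ℂ))) + c + d) * f k)) :
    ∀ m : ℤ, f m = g := by
  have hgood : ∀ k : ℤ, (k:ℂ) ≠ c - d → f k = g := by
    intro k hk
    have h := H 0 k
    rw [zero_add] at h
    have h2 : ((k:ℂ) - (c - d)) * (f k - g) = 0 := by push_cast at h; linear_combination 2 * h
    rcases mul_eq_zero.mp h2 with h3 | h3
    · exact absurd (by linear_combination h3) hk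
    · linear_combination h3
  intro m
  by_cases hm : (m:ℂ) = c - d
  · have hn : ∃ n : ℤ, n ≠ 0 ∧ c - 2*(n:ℂ) ≠ 0 := by
      by_cases hc : c = 2
      · exact ⟨-1, by omega, by rw [hc]; norm_num⟩
      · exact ⟨1, by omega, by simpa [sub_eq_zero] using hc⟩
    obtain ⟨n, hn0, hcn⟩ := hn
    have h := H n (m - n)
    rw [show n + (m-n) = m from by omega] at h
    have hfk : f (m-n) = g := hgood (m-n) (fun hc => hn0 (by
      have h4 : ((m-n:ℤ):ℂ) = (m:ℂ) := by rw [hc, ← hm]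
      push_cast at h4
      exact_mod_cast (by linear_combination -h4 : ((n:ℤ):ℂ) = ((0:ℤ):ℂ))))
    rw [hfk] at h
    have h5 : (c - 2*(n:ℂ)) * f m = (c - 2*(n:ℂ)) * g := by
      push_cast at h ⊢; linear_combination h - (f m - g) * hm
    exact mul_left_cancel₀ hcn h5
  · exact hgood m hm

lemma key3 (f : ℤ → ℤ → ℂ) (e : ℂ)
    (H : ∀ n k s : ℤ, (((k:ℂ) - (n:ℂ)) + e) * f (n+k) s
        = (1/2) * (((s:ℂ) - 2*(n:ℂ)) * f k (s-n))) :
    ∀ m s : ℤ, f m s = 0 := by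
  have hgood : ∀ k s : ℤ, (s:ℂ) ≠ 2*(k:ℂ) + 2*e → f k s = 0 := by
    intro k s hk
    have h := H 0 k s
    rw [zero_add] at h
    have h2 : (2*(k:ℂ) + 2*e - s) * (f k s) = 0 := by
      push_cast at h
      rw [show s - (0:ℤ) = s from by omega] at h
      linear_combination 2 * h
    rcases mul_eq_zero.mp h2 with h3 | h3
    · exact absurd (by linear_combination -h3) hk
    · exact h3
  intro m s
  by_cases hm : (s:ℂ) = 2*(m:ℂ) + 2*e
  · have hn : ∃ n : ℤ, n ≠ 0 ∧ (s:ℂ) - 4*(n:ℂ) ≠ 0 := by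
      by_cases hs : s = 4
      · refine ⟨-1, by omega, ?_⟩
        rw [hs]; norm_num
      · refine ⟨1, by omega, ?_⟩
        intro hc
        apply hs
        exact_mod_cast (by push_cast; linear_combination hc : ((s:ℤ):ℂ) = ((4:ℤ):ℂ))
    obtain ⟨n, hn0, hsn⟩ := hn
    have h := H n (m - n) s
    rw [show n + (m-n) = m from by omega] at h
    have hfk : f (m-n) (s-n) = 0 := by
      apply hgood
      push_cast
      intro hc
      apply hn0
      have : ((n:ℤ):ℂ) = ((0:ℤ):ℂ) := by push_cast; linear_combination hc - hm
      exact_mod_cast this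
    rw [hfk] at h
    have h5 : ((s:ℂ) - 4*(n:ℂ)) * f m s = 0 := by
      push_cast at h ⊢; linear_combination 2 * h + (f m s) * hm
    rcases mul_eq_zero.mp h5 with h6 | h6
    · exact absurd h6 hsn
    · exact h6
  · exact hgood m s hm

lemma key0 (f : ℤ → ℤ → ℂ)
    (H : ∀ n k s : ℤ, ((k:ℂ) - (n:ℂ)) * f (n+k+1) s = 0) :
    ∀ m s : ℤ, f m s = 0 := by
  intro m s
  by_cases hm : m = -1
  · have h := H 0 (-2) s
    rw [show (0:ℤ) + -2 + 1 = -1 from by omega] at h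
    subst hm
    have := mul_eq_zero.mp h
    rcases this with h3 | h3
    · norm_num at h3
    · exact h3
  · have h := H (-1) m s
    rw [show (-1:ℤ) + m + 1 = m from by omega] at h
    rcases mul_eq_zero.mp h with h3 | h3
    · exfalso; apply hm
      exact_mod_cast (by push_cast; linear_combination h3 : ((m:ℤ):ℂ) = ((-1:ℤ):ℂ))
    · exact h3

section
variable (a : ℂ) (φ : SW →ₗ[ℂ] SW) (hφ : IsHalfDerivationSW a (-1) φ)
include hφ

lemma A_eq : ∀ t m : ℤ, φ (Lb m) (SWBasis.L (m+t)) = φ (Lb 0) (SWBasis.L t) := by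
  intro t
  refine key1 (fun m => φ (Lb m) (SWBasis.L (m+t))) (φ (Lb 0) (SWBasis.L t)) (t:ℂ)
    (by simp) ?_
  intro n k
  have h := hphi_eval a φ hφ (SWBasis.L n) (SWBasis.L k) (SWBasis.L (n+k+t))
  rw [sR_L_L, sL_L_L,
    show n+k+t-k = n+t from by omega, show n+k+t-n = k+t from by omega,
    show swBracketBasis a (-1) (SWBasis.L n) (SWBasis.L k) = ((k:ℂ)-(n:ℂ)) • Lb (n+k) from rfl,
    map_smul, Finsupp.smul_apply, smul_eq_mul] at h
  simp only [Lb_def] at h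
  push_cast at h ⊢
  linear_combination h

lemma B_eq : ∀ t m : ℤ, φ (Lb m) (SWBasis.I (m+t)) = φ (Lb 0) (SWBasis.I t) := by
  intro t
  refine key1 (fun m => φ (Lb m) (SWBasis.I (m+t))) (φ (Lb 0) (SWBasis.I t)) ((t:ℂ)+a)
    (by simp) ?_
  intro n k
  have h := hphi_eval a φ hφ (SWBasis.L n) (SWBasis.L k) (SWBasis.I (n+k+t))
  rw [sR_L_I, sL_L_I,
    show n+k+t-k = n+t from by omega, show n+k+t-n = k+t from by omega,
    show swBracketBasis a (-1) (SWBasis.L n) (SWBasis.L k) = ((k:ℂ)-(n:ℂ)) • Lb (n+k) from rfl,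
    map_smul, Finsupp.smul_apply, smul_eq_mul] at h
  simp only [Lb_def] at h
  push_cast at h ⊢
  linear_combination h

lemma C_eq : ∀ t m : ℤ, φ (Lb m) (SWBasis.Y (m+t)) = φ (Lb 0) (SWBasis.Y t) := by
  intro t
  refine key1 (fun m => φ (Lb m) (SWBasis.Y (m+t))) (φ (Lb 0) (SWBasis.Y t)) ((t:ℂ)+1/2+a/2)
    (by simp) ?_
  intro n k
  have h := hphi_eval a φ hφ (SWBasis.L n) (SWBasis.L k) (SWBasis.Y (n+k+t))
  rw [sR_L_Y, sL_L_Y,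
    show n+k+t-k = n+t from by omega, show n+k+t-n = k+t from by omega,
    show swBracketBasis a (-1) (SWBasis.L n) (SWBasis.L k) = ((k:ℂ)-(n:ℂ)) • Lb (n+k) from rfl,
    map_smul, Finsupp.smul_apply, smul_eq_mul] at h
  simp only [Lb_def] at h
  push_cast at h ⊢
  linear_combination h

lemma S_eq : ∀ m s : ℤ, φ (Yb m) (SWBasis.L s) = 0 := by
  refine key3 (fun m s => φ (Yb m) (SWBasis.L s)) (1/2 + a/2) ?_
  intro n k s
  have h := hphi_eval a φ hφ (SWBasis.L n) (SWBasis.Y k) (SWBasis.L s)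
  rw [sR_Y_L, sL_L_L,
    show swBracketBasis a (-1) (SWBasis.L n) (SWBasis.Y k)
      = ((k:ℂ) + 1/2 + (((-1:ℂ) - 1) * (n:ℂ) + a)/2) • Yb (n+k) from rfl,
    map_smul, Finsupp.smul_apply, smul_eq_mul] at h
  simp only [Yb_def, Lb_def] at h
  push_cast at h ⊢
  linear_combination h

lemma P_eq : ∀ m s : ℤ, φ (Ib m) (SWBasis.L s) = 0 := by
  refine key0 (fun m s => φ (Ib m) (SWBasis.L s)) ?_
  intro n k s
  have h := hphi_eval a φ hφ (SWBasis.Y n) (SWBasis.Y k) (SWBasis.L s)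
  rw [sR_Y_L, sL_Y_L,
    show swBracketBasis a (-1) (SWBasis.Y n) (SWBasis.Y k) = ((k:ℂ)-(n:ℂ)) • Ib (n+k+1) from rfl,
    map_smul, Finsupp.smul_apply, smul_eq_mul] at h
  push_cast at h ⊢
  linear_combination h

lemma R_eq : ∀ m s : ℤ, φ (Ib m) (SWBasis.Y s) = 0 := by
  refine key0 (fun m s => φ (Ib m) (SWBasis.Y s)) ?_
  intro n k s
  have h := hphi_eval a φ hφ (SWBasis.Y n) (SWBasis.Y k) (SWBasis.Y s)
  rw [sR_Y_Y, sL_Y_Y,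
    show swBracketBasis a (-1) (SWBasis.Y n) (SWBasis.Y k) = ((k:ℂ)-(n:ℂ)) • Ib (n+k+1) from rfl,
    map_smul, Finsupp.smul_apply, smul_eq_mul] at h
  simp only [Ib_def, Yb_def] at h
  rw [S_eq a φ hφ n (s-k), S_eq a φ hφ k (s-n)] at h
  push_cast at h ⊢
  linear_combination h

lemma Q_eq : ∀ t m : ℤ, φ (Ib m) (SWBasis.I (m+t)) = φ (Lb 0) (SWBasis.L t) := by
  intro t
  refine key2 (fun m => φ (Ib m) (SWBasis.I (m+t))) (φ (Lb 0) (SWBasis.L t)) (t:ℂ) a ?_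
  intro n k
  have h := hphi_eval a φ hφ (SWBasis.L n) (SWBasis.I k) (SWBasis.I (n+k+t))
  rw [sR_I_I, sL_L_I,
    show n+k+t-k = n+t from by omega, show n+k+t-n = k+t from by omega,
    show swBracketBasis a (-1) (SWBasis.L n) (SWBasis.I k)
      = ((k:ℂ) + (-1:ℂ)*(n:ℂ) + a) • Ib (n+k) from rfl,
    map_smul, Finsupp.smul_apply, smul_eq_mul] at h
  simp only [Lb_def, Ib_def] at h
  rw [A_eq a φ hφ t n] at h
  push_cast at h ⊢
  linear_combination h

lemma U_eq : ∀ t m : ℤ, φ (Yb m) (SWBasis.Y (m+t)) = φ (Lb 0) (SWBasis.L t) := by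
  intro t
  refine key2 (fun m => φ (Yb m) (SWBasis.Y (m+t))) (φ (Lb 0) (SWBasis.L t)) (t:ℂ) (1/2+a/2) ?_
  intro n k
  have h := hphi_eval a φ hφ (SWBasis.L n) (SWBasis.Y k) (SWBasis.Y (n+k+t))
  rw [sR_Y_Y, sL_L_Y,
    show n+k+t-k = n+t from by omega, show n+k+t-n = k+t from by omega,
    show swBracketBasis a (-1) (SWBasis.L n) (SWBasis.Y k)
      = ((k:ℂ) + 1/2 + (((-1:ℂ) - 1) * (n:ℂ) + a)/2) • Yb (n+k) from rfl,
    map_smul, Finsupp.smul_apply, smul_eq_mul] at h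
  simp only [Lb_def, Yb_def] at h
  rw [A_eq a φ hφ t n] at h
  push_cast at h ⊢
  linear_combination h

lemma T_eq : ∀ t m : ℤ, φ (Yb m) (SWBasis.I (m+t+1)) = φ (Lb 0) (SWBasis.Y t) := by
  intro t
  refine key2 (fun m => φ (Yb m) (SWBasis.I (m+t+1))) (φ (Lb 0) (SWBasis.Y t))
    ((t:ℂ)+1/2+a/2) (1/2+a/2) ?_
  intro n k
  have h := hphi_eval a φ hφ (SWBasis.L n) (SWBasis.Y k) (SWBasis.I (n+k+t+1))
  rw [sR_Y_I, sL_L_I,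
    show n+k+t+1-k-1 = n+t from by omega, show n+k+t+1-n = k+t+1 from by omega,
    show swBracketBasis a (-1) (SWBasis.L n) (SWBasis.Y k)
      = ((k:ℂ) + 1/2 + (((-1:ℂ) - 1) * (n:ℂ) + a)/2) • Yb (n+k) from rfl,
    map_smul, Finsupp.smul_apply, smul_eq_mul] at h
  simp only [Lb_def, Yb_def, Ib_def] at h
  rw [C_eq a φ hφ t n] at h
  push_cast at h ⊢
  linear_combination h

end

lemma eval_cross (α : ℤ →₀ ℂ) (g : ℤ → SWBasis) (e : SWBasis) (h : ∀ t, g t ≠ e) :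
    (α.sum fun t c => c • (Finsupp.single (g t) (1:ℂ) : SW)) e = 0 := by
  rw [Finsupp.sum_apply, Finsupp.sum]
  exact Finset.sum_eq_zero fun t _ => smul_single_ne _ _ _ (h t)

lemma eval_diag_L (α : ℤ →₀ ℂ) (m s : ℤ) :
    (α.sum fun t c => c • Lb (m+t)) (SWBasis.L s) = α (s-m) := by
  classical
  have key : ∀ t c, ((c:ℂ) • Lb (m+t)) (SWBasis.L s) = if t = s - m then c else 0 := by
    intro t c
    by_cases ht : t = s - m
    · subst ht
      rw [if_pos rfl, show m + (s-m) = s from by omega, Lb, Finsupp.smul_apply,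
        Finsupp.single_eq_same, smul_eq_mul, mul_one]
    · rw [if_neg ht]
      exact smul_single_ne c _ _ (by simp only [ne_eq, SWBasis.L.injEq]; omega)
  rw [Finsupp.sum_apply,
    Finsupp.sum_congr (g2 := fun t c => if t = s-m then c else 0) (fun t _ => key t (α t))]
  exact Finsupp.sum_ite_self_eq' α (s-m)

lemma eval_diag_I (α : ℤ →₀ ℂ) (m s : ℤ) :
    (α.sum fun t c => c • Ib (m+t)) (SWBasis.I s) = α (s-m) := by
  classical
  have key : ∀ t c, ((c:ℂ) • Ib (m+t)) (SWBasis.I s) = if t = s - m then c else 0 := by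
    intro t c
    by_cases ht : t = s - m
    · subst ht
      rw [if_pos rfl, show m + (s-m) = s from by omega, Ib, Finsupp.smul_apply,
        Finsupp.single_eq_same, smul_eq_mul, mul_one]
    · rw [if_neg ht]
      exact smul_single_ne c _ _ (by simp only [ne_eq, SWBasis.I.injEq]; omega)
  rw [Finsupp.sum_apply,
    Finsupp.sum_congr (g2 := fun t c => if t = s-m then c else 0) (fun t _ => key t (α t))]
  exact Finsupp.sum_ite_self_eq' α (s-m)

lemma eval_diag_Y (α : ℤ →₀ ℂ) (m s : ℤ) :
    (α.sum fun t c => c • Yb (m+t)) (SWBasis.Y s) = α (s-m) := by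
  classical
  have key : ∀ t c, ((c:ℂ) • Yb (m+t)) (SWBasis.Y s) = if t = s - m then c else 0 := by
    intro t c
    by_cases ht : t = s - m
    · subst ht
      rw [if_pos rfl, show m + (s-m) = s from by omega, Yb, Finsupp.smul_apply,
        Finsupp.single_eq_same, smul_eq_mul, mul_one]
    · rw [if_neg ht]
      exact smul_single_ne c _ _ (by simp only [ne_eq, SWBasis.Y.injEq]; omega)
  rw [Finsupp.sum_apply,
    Finsupp.sum_congr (g2 := fun t c => if t = s-m then c else 0) (fun t _ => key t (α t))]
  exact Finsupp.sum_ite_self_eq' α (s-m)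

lemma eval_diag_I' (α : ℤ →₀ ℂ) (m s : ℤ) :
    (α.sum fun t c => c • Ib (m+t+1)) (SWBasis.I s) = α (s-m-1) := by
  classical
  have key : ∀ t c, ((c:ℂ) • Ib (m+t+1)) (SWBasis.I s) = if t = s - m - 1 then c else 0 := by
    intro t c
    by_cases ht : t = s - m - 1
    · subst ht
      rw [if_pos rfl, show m + (s-m-1) + 1 = s from by omega, Ib, Finsupp.smul_apply,
        Finsupp.single_eq_same, smul_eq_mul, mul_one]
    · rw [if_neg ht]
      exact smul_single_ne c _ _ (by simp only [ne_eq, SWBasis.I.injEq]; omega)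
  rw [Finsupp.sum_apply,
    Finsupp.sum_congr (g2 := fun t c => if t = s-m-1 then c else 0) (fun t _ => key t (α t))]
  exact Finsupp.sum_ite_self_eq' α (s-m-1)

lemma eval_Lb_ne (α : ℤ →₀ ℂ) (m : ℤ) (e : SWBasis) (h : ∀ t, SWBasis.L (m+t) ≠ e) :
    (α.sum fun t c => c • Lb (m+t)) e = 0 := eval_cross α _ e h

lemma eval_Ib_ne (α : ℤ →₀ ℂ) (m : ℤ) (e : SWBasis) (h : ∀ t, SWBasis.I (m+t) ≠ e) :
    (α.sum fun t c => c • Ib (m+t)) e = 0 := eval_cross α _ e h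

lemma eval_Yb_ne (α : ℤ →₀ ℂ) (m : ℤ) (e : SWBasis) (h : ∀ t, SWBasis.Y (m+t) ≠ e) :
    (α.sum fun t c => c • Yb (m+t)) e = 0 := eval_cross α _ e h

lemma eval_Ib1_ne (α : ℤ →₀ ℂ) (m : ℤ) (e : SWBasis) (h : ∀ t, SWBasis.I (m+t+1) ≠ e) :
    (α.sum fun t c => c • Ib (m+t+1)) e = 0 := eval_cross α _ e h

/-- description of all ½-derivations of 𝒲(a,−1,1/2):
they are given by three finitely supported families α, β, γ of complex numbers. -/
theorem stmt4 (a : ℂ) (φ : SW →ₗ[ℂ] SW) (hφ : IsHalfDerivationSW a (-1) φ) :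
    ∃ α β γ : ℤ →₀ ℂ,
      (∀ m : ℤ, φ (Lb m) =
        α.sum (fun t c => c • Lb (m + t)) +
        β.sum (fun t c => c • Ib (m + t)) +
        γ.sum (fun t c => c • Yb (m + t))) ∧
      (∀ m : ℤ, φ (Ib m) = α.sum (fun t c => c • Ib (m + t))) ∧
      (∀ m : ℤ, φ (Yb m) =
        α.sum (fun t c => c • Yb (m + t)) +
        γ.sum (fun t c => c • Ib (m + t + 1))) := by
  classical
  have hLinj : Function.Injective SWBasis.L := fun x y h => by injection h
  have hIinj : Function.Injective SWBasis.I := fun x y h => by injection h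
  have hYinj : Function.Injective SWBasis.Y := fun x y h => by injection h
  refine ⟨Finsupp.comapDomain SWBasis.L (φ (Lb 0)) hLinj.injOn,
          Finsupp.comapDomain SWBasis.I (φ (Lb 0)) hIinj.injOn,
          Finsupp.comapDomain SWBasis.Y (φ (Lb 0)) hYinj.injOn, ?_, ?_, ?_⟩
  · intro m
    ext e
    rcases e with s|s|s
    · rw [Finsupp.add_apply, Finsupp.add_apply, eval_diag_L,
        eval_Ib_ne _ _ _ (fun t => by simp),
        eval_Yb_ne _ _ _ (fun t => by simp),
        add_zero, add_zero, Finsupp.comapDomain_apply]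
      have h := A_eq a φ hφ (s-m) m
      rwa [show m + (s-m) = s from by omega] at h
    · rw [Finsupp.add_apply, Finsupp.add_apply, eval_diag_I,
        eval_Lb_ne _ _ _ (fun t => by simp),
        eval_Yb_ne _ _ _ (fun t => by simp),
        zero_add, add_zero, Finsupp.comapDomain_apply]
      have h := B_eq a φ hφ (s-m) m
      rwa [show m + (s-m) = s from by omega] at h
    · rw [Finsupp.add_apply, Finsupp.add_apply, eval_diag_Y,
        eval_Lb_ne _ _ _ (fun t => by simp),
        eval_Ib_ne _ _ _ (fun t => by simp),
        zero_add, zero_add, Finsupp.comapDomain_apply]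
      have h := C_eq a φ hφ (s-m) m
      rwa [show m + (s-m) = s from by omega] at h
  · intro m
    ext e
    rcases e with s|s|s
    · rw [P_eq a φ hφ, eval_Ib_ne _ _ _ (fun t => by simp)]
    · rw [eval_diag_I, Finsupp.comapDomain_apply]
      have h := Q_eq a φ hφ (s-m) m
      rwa [show m + (s-m) = s from by omega] at h
    · rw [R_eq a φ hφ, eval_Ib_ne _ _ _ (fun t => by simp)]
  · intro m
    ext e
    rcases e with s|s|s
    · rw [S_eq a φ hφ, Finsupp.add_apply,
        eval_Yb_ne _ _ _ (fun t => by simp),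
        eval_Ib1_ne _ _ _ (fun t => by simp),
        add_zero]
    · rw [Finsupp.add_apply,
        eval_Yb_ne _ _ _ (fun t => by simp),
        eval_diag_I', zero_add, Finsupp.comapDomain_apply]
      have h := T_eq a φ hφ (s-m-1) m
      rwa [show m + (s-m-1) + 1 = s from by omega] at h
    · rw [Finsupp.add_apply, eval_diag_Y,
        eval_Ib1_ne _ _ _ (fun t => by simp),
        add_zero, Finsupp.comapDomain_apply]
      have h := U_eq a φ hφ (s-m) m
      rwa [show m + (s-m) = s from by omega] at h
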